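/- arXiv:2309.01550 — 3 statements merged into one kernel-verified Lean document; each statement's English description precedes it below -/
import Mathlib

section
/- Let p = (p₁,p₂,p₃) be a vector of nonnegative reals with p₁+p₂+p₃ ≤ 4, and suppose q₂₃ := 1−(p₂+p₃)/2, q₃₁ := 1−(p₃+p₁)/2, and q₁₂ := 1−(p₁+p₂)/2 are all nonnegative. For an integer L ≥ 1 define ε₁ := (1/4)[1 + q₂₃^{1/L} − q₃₁^{1/L} − q₁₂^{1/L}], ε₂ := (1/4)[1 − q₂₃^{1/L} + q₃₁^{1/L} − q₁₂^{1/L}], ε₃ := (1/4)[1 − q₂₃^{1/L} − q₃₁^{1/L} + q₁₂^{1/L}] (real L-th roots). Then the L-fold composition of the linear map T_ε(ρ) := (1−ε₁−ε₂−ε₃)ρ + ε₁σ₁ρσ₁ + ε₂σ₂ρσ₂ + ε₃σ₃ρσ₃ on 2×2 complex matrices equals the Pauli channel E_p, i.e. T_ε∘T_ε∘…∘T_ε (L times) = E_p. -/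
/-!
A Pauli channel is diagonal in the Pauli basis: `σ₀` is fixed and `σ₁, σ₂, σ₃` are scaled by
`q₂₃, q₃₁, q₁₂`. Composing Pauli-diagonal maps multiplies these eigenvalues, and `T_ε` is the
Pauli-diagonal map with eigenvalues `q₂₃^{1/L}, q₃₁^{1/L}, q₁₂^{1/L}`, so its `L`-th iterate
is `E_p`.
-/

open Matrix Kronecker
open scoped ComplexOrder

noncomputable section

/-- 2×2 complex matrices (one qubit). -/
abbrev Mat2 := Matrix (Fin 2) (Fin 2) ℂ

/-- 4×4 complex matrices indexed by `(Fin 2) × (Fin 2)` (two qubits). -/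
abbrev Mat4 := Matrix (Fin 2 × Fin 2) (Fin 2 × Fin 2) ℂ

/-- The identity and the three Pauli matrices: σ₀, σ₁, σ₂, σ₃. -/
def pauli : Fin 4 → Mat2 :=
  ![1, !![0, 1; 1, 0], !![0, -Complex.I; Complex.I, 0], !![1, 0; 0, -1]]

/-- Weights `(p₀, p₁, p₂, p₃)` with `p₀ := 4 - (p₁ + p₂ + p₃)`. -/
def pw (p : Fin 3 → ℝ) : Fin 4 → ℝ := ![4 - (p 0 + p 1 + p 2), p 0, p 1, p 2]

/-- Single-qubit Pauli channel `E_p(ρ) = Σ_k (p_k/4) σ_k ρ σ_k`. -/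
def pauliCh (p : Fin 3 → ℝ) (ρ : Mat2) : Mat2 :=
  ∑ k : Fin 4, ((pw p k / 4 : ℝ) : ℂ) • (pauli k * ρ * pauli k)

/-- `E_p ⊗ id` acting on two-qubit matrices. -/
def pauliFst (p : Fin 3 → ℝ) (ρ : Mat4) : Mat4 :=
  ∑ k : Fin 4, ((pw p k / 4 : ℝ) : ℂ) • ((pauli k ⊗ₖ 1) * ρ * (pauli k ⊗ₖ 1))

/-- Local Pauli channel `E_p ⊗ E_p'` acting on two-qubit matrices. -/
def pauliLoc (p p' : Fin 3 → ℝ) (ρ : Mat4) : Mat4 :=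
  ∑ k : Fin 4, ∑ l : Fin 4,
    ((pw p k * pw p' l / 16 : ℝ) : ℂ) •
      ((pauli k ⊗ₖ pauli l) * ρ * (pauli k ⊗ₖ pauli l))

/-- Partial transpose on the first qubit. -/
def ptranspose (ρ : Mat4) : Mat4 := fun x y => ρ (y.1, x.2) (x.1, y.2)

/-- Smallest (real) eigenvalue of a matrix. -/
def lambdaMin (A : Mat4) : ℝ :=
  sInf {c : ℝ | ∃ v : Fin 2 × Fin 2 → ℂ, v ≠ 0 ∧ A *ᵥ v = (c : ℂ) • v}

/-- Measure of entanglement `M(ρ) = max (0, −2 λ_min(ρ^{T₁}))`. -/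
def entMeasure (ρ : Mat4) : ℝ := max 0 (-2 * lambdaMin (ptranspose ρ))

/-- Two-qubit density matrix. -/
def IsDensity (ρ : Mat4) : Prop := ρ.PosSemidef ∧ ρ.trace = 1

/-- Depolarizing channel `D_q(ρ) = (1−q)·tr(ρ)·I/2 + q·ρ`. -/
def depol (q : ℝ) (ρ : Mat2) : Mat2 :=
  (((1 - q : ℝ) : ℂ) * ρ.trace / 2) • (1 : Mat2) + ((q : ℝ) : ℂ) • ρ

/-- Basis vector `|ij⟩` of the two-qubit space. -/
def ket2 (i j : Fin 2) : (Fin 2 × Fin 2) → ℂ := fun x => if x = (i, j) then 1 else 0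

/-- The four Bell states `|Ψ⁰⟩, |Ψ¹⟩, |Ψ²⟩, |Ψ³⟩`. -/
def bell : Fin 4 → ((Fin 2 × Fin 2) → ℂ) :=
  ![(((Real.sqrt 2 : ℝ) : ℂ))⁻¹ • (ket2 0 0 + ket2 1 1),
    (((Real.sqrt 2 : ℝ) : ℂ))⁻¹ • (ket2 0 1 + ket2 1 0),
    (((Real.sqrt 2 : ℝ) : ℂ) * Complex.I)⁻¹ • (ket2 0 1 - ket2 1 0),
    (((Real.sqrt 2 : ℝ) : ℂ))⁻¹ • (ket2 0 0 - ket2 1 1)]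

/-- Rank-one projector `|ψ⟩⟨ψ|`. -/
def proj (ψ : (Fin 2 × Fin 2) → ℂ) : Mat4 := fun a b => ψ a * (starRingEnd ℂ) (ψ b)

/-- Its Kraus weights are the inverse Hadamard transform of `(1, l 0, l 1, l 2)`, so it fixes `σ₀`
and scales `σ₁, σ₂, σ₃` by `l 0, l 1, l 2`. -/
def pauliDiag (l : Fin 3 → ℝ) (ρ : Mat2) : Mat2 :=
  (((1 + l 0 + l 1 + l 2) / 4 : ℝ) : ℂ) • ρ
    + (((1 + l 0 - l 1 - l 2) / 4 : ℝ) : ℂ) • (pauli 1 * ρ * pauli 1)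
    + (((1 - l 0 + l 1 - l 2) / 4 : ℝ) : ℂ) • (pauli 2 * ρ * pauli 2)
    + (((1 - l 0 - l 1 + l 2) / 4 : ℝ) : ℂ) • (pauli 3 * ρ * pauli 3)

/-- The eigenvalues `(q₂₃, q₃₁, q₁₂)` of the Pauli channel `E_p`. -/
def pauliEig (p : Fin 3 → ℝ) : Fin 3 → ℝ :=
  ![1 - (p 1 + p 2) / 2, 1 - (p 2 + p 0) / 2, 1 - (p 0 + p 1) / 2]

lemma pauli_one_conj (ρ : Mat2) : pauli 1 * ρ * pauli 1 = !![ρ 1 1, ρ 1 0; ρ 0 1, ρ 0 0] := by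
  ext i j
  fin_cases i <;> fin_cases j <;>
    simp [pauli, mul_apply, vecMul, dotProduct, Fin.sum_univ_two]

lemma pauli_two_conj (ρ : Mat2) : pauli 2 * ρ * pauli 2 = !![ρ 1 1, -ρ 1 0; -ρ 0 1, ρ 0 0] := by
  ext i j
  fin_cases i <;> fin_cases j <;>
    simp [pauli, mul_apply, vecMul, dotProduct, Fin.sum_univ_two] <;>
    ring_nf <;> simp [Complex.I_sq]

lemma pauli_three_conj (ρ : Mat2) : pauli 3 * ρ * pauli 3 = !![ρ 0 0, -ρ 0 1; -ρ 1 0, ρ 1 1] := by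
  ext i j
  fin_cases i <;> fin_cases j <;> simp [pauli, mul_apply, vecMul, dotProduct, Fin.sum_univ_two]

lemma pauliDiag_eq_fin_two (l : Fin 3 → ℝ) (ρ : Mat2) :
    pauliDiag l ρ =
      !![(((1 + l 2) / 2 : ℝ) : ℂ) * ρ 0 0 + (((1 - l 2) / 2 : ℝ) : ℂ) * ρ 1 1,
         (((l 0 + l 1) / 2 : ℝ) : ℂ) * ρ 0 1 + (((l 0 - l 1) / 2 : ℝ) : ℂ) * ρ 1 0;
         (((l 0 + l 1) / 2 : ℝ) : ℂ) * ρ 1 0 + (((l 0 - l 1) / 2 : ℝ) : ℂ) * ρ 0 1,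
         (((1 + l 2) / 2 : ℝ) : ℂ) * ρ 1 1 + (((1 - l 2) / 2 : ℝ) : ℂ) * ρ 0 0] := by
  rw [pauliDiag, pauli_one_conj, pauli_two_conj, pauli_three_conj]
  ext i j
  fin_cases i <;> fin_cases j <;> simp <;> ring

lemma pauliDiag_one : pauliDiag 1 = id := by
  funext ρ
  ext i j
  fin_cases i <;> fin_cases j <;> simp [pauliDiag_eq_fin_two]

lemma pauliDiag_comp (l m : Fin 3 → ℝ) : pauliDiag l ∘ pauliDiag m = pauliDiag (l * m) := by
  funext ρ
  simp only [Function.comp_apply, pauliDiag_eq_fin_two, Pi.mul_apply]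
  ext i j
  fin_cases i <;> fin_cases j <;> simp <;> ring

lemma pauliDiag_iterate (l : Fin 3 → ℝ) (n : ℕ) : (pauliDiag l)^[n] = pauliDiag (l ^ n) := by
  induction n with
  | zero => rw [Function.iterate_zero, pow_zero, pauliDiag_one]
  | succ n ih => rw [Function.iterate_succ', ih, pauliDiag_comp, pow_succ']

lemma pauliCh_eq_pauliDiag (p : Fin 3 → ℝ) : pauliCh p = pauliDiag (pauliEig p) := by
  funext ρ
  have hσ₀ : pauli 0 = 1 := rfl
  simp only [pauliCh, pauliDiag, pauliEig, pw, Fin.sum_univ_four, hσ₀, one_mul, mul_one,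
    cons_val]
  push_cast
  module

theorem pauliCh_iterate_decomposition_general (p : Fin 3 → ℝ)
    (h23 : 0 ≤ 1 - (p 1 + p 2) / 2) (h31 : 0 ≤ 1 - (p 2 + p 0) / 2)
    (h12 : 0 ≤ 1 - (p 0 + p 1) / 2)
    (L : ℕ) (hL : 1 ≤ L) (ε : Fin 3 → ℝ)
    (hε1 : ε 0 = (1/4) * (1 + (1 - (p 1 + p 2) / 2) ^ (1 / (L : ℝ))
      - (1 - (p 2 + p 0) / 2) ^ (1 / (L : ℝ)) - (1 - (p 0 + p 1) / 2) ^ (1 / (L : ℝ))))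
    (hε2 : ε 1 = (1/4) * (1 - (1 - (p 1 + p 2) / 2) ^ (1 / (L : ℝ))
      + (1 - (p 2 + p 0) / 2) ^ (1 / (L : ℝ)) - (1 - (p 0 + p 1) / 2) ^ (1 / (L : ℝ))))
    (hε3 : ε 2 = (1/4) * (1 - (1 - (p 1 + p 2) / 2) ^ (1 / (L : ℝ))
      - (1 - (p 2 + p 0) / 2) ^ (1 / (L : ℝ)) + (1 - (p 0 + p 1) / 2) ^ (1 / (L : ℝ))))
    (ρ : Mat2) :
    (fun τ : Mat2 =>
        ((1 - ε 0 - ε 1 - ε 2 : ℝ) : ℂ) • τ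
          + ((ε 0 : ℝ) : ℂ) • (pauli 1 * τ * pauli 1)
          + ((ε 1 : ℝ) : ℂ) • (pauli 2 * τ * pauli 2)
          + ((ε 2 : ℝ) : ℂ) • (pauli 3 * τ * pauli 3))^[L] ρ
      = pauliCh p ρ := by
  set r : Fin 3 → ℝ := fun i => pauliEig p i ^ (1 / (L : ℝ))
  have hr0 : (1 - (p 1 + p 2) / 2) ^ (1 / (L : ℝ)) = r 0 := rfl
  have hr1 : (1 - (p 2 + p 0) / 2) ^ (1 / (L : ℝ)) = r 1 := rfl
  have hr2 : (1 - (p 0 + p 1) / 2) ^ (1 / (L : ℝ)) = r 2 := rfl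
  rw [hr0, hr1, hr2] at hε1 hε2 hε3
  have hroot : r ^ L = pauliEig p := by
    funext i
    have hq : 0 ≤ pauliEig p i := by fin_cases i <;> assumption
    show (pauliEig p i ^ (1 / (L : ℝ))) ^ L = _
    rw [one_div, Real.rpow_inv_natCast_pow hq (by omega)]
  trans (pauliDiag r)^[L] ρ
  · congr 1
    funext τ
    simp only [pauliDiag, hε1, hε2, hε3]
    push_cast
    module
  rw [pauliDiag_iterate, hroot, pauliCh_eq_pauliDiag]

/-- a Pauli channel decomposes into the `L`-fold composition of the
channel `T_ε` with probabilities defined via real `L`-th roots. -/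
theorem pauliCh_iterate_decomposition (p : Fin 3 → ℝ) (hp : ∀ i, 0 ≤ p i)
    (hpsum : p 0 + p 1 + p 2 ≤ 4)
    (h23 : 0 ≤ 1 - (p 1 + p 2) / 2) (h31 : 0 ≤ 1 - (p 2 + p 0) / 2)
    (h12 : 0 ≤ 1 - (p 0 + p 1) / 2)
    (L : ℕ) (hL : 1 ≤ L) (ε : Fin 3 → ℝ)
    (hε1 : ε 0 = (1/4) * (1 + (1 - (p 1 + p 2) / 2) ^ (1 / (L : ℝ))
      - (1 - (p 2 + p 0) / 2) ^ (1 / (L : ℝ)) - (1 - (p 0 + p 1) / 2) ^ (1 / (L : ℝ))))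
    (hε2 : ε 1 = (1/4) * (1 - (1 - (p 1 + p 2) / 2) ^ (1 / (L : ℝ))
      + (1 - (p 2 + p 0) / 2) ^ (1 / (L : ℝ)) - (1 - (p 0 + p 1) / 2) ^ (1 / (L : ℝ))))
    (hε3 : ε 2 = (1/4) * (1 - (1 - (p 1 + p 2) / 2) ^ (1 / (L : ℝ))
      - (1 - (p 2 + p 0) / 2) ^ (1 / (L : ℝ)) + (1 - (p 0 + p 1) / 2) ^ (1 / (L : ℝ))))
    (ρ : Mat2) :
    (fun τ : Mat2 =>
        ((1 - ε 0 - ε 1 - ε 2 : ℝ) : ℂ) • τ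
          + ((ε 0 : ℝ) : ℂ) • (pauli 1 * τ * pauli 1)
          + ((ε 1 : ℝ) : ℂ) • (pauli 2 * τ * pauli 2)
          + ((ε 2 : ℝ) : ℂ) • (pauli 3 * τ * pauli 3))^[L] ρ
      = pauliCh p ρ :=
  pauliCh_iterate_decomposition_general p h23 h31 h12 L hL ε hε1 hε2 hε3 ρ
end
end

section
/- Let p = (p₁,p₂,p₃) be a vector of nonnegative reals with p₁+p₂+p₃ ≤ 4, p₀ := 4 − (p₁+p₂+p₃), α₀ := p₀²+p₁²+p₂²+p₃², α₁ := 2(p₀p₁+p₂p₃), α₂ := 2(p₀p₂+p₃p₁), α₃ := 2(p₀p₃+p₁p₂), and let q^{(j)}_p and q_p be as defined below. Then for every real q_N and every 2×2 complex matrix ρ with tr(ρ) = 1: Σ_{k=0}^{3} (α_k/16)·σ_k·[(1−q_N)·I/2 + q_N·ρ]·σ_k = ((1+3q_N q_p)/4)·ρ + Σ_{j=1}^{3} ((1−q_N q^{(j)}_p)/4)·σ_j ρ σ_j. -/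
open Matrix Kronecker
open scoped ComplexOrder

noncomputable section

/-- Bell-diagonal weights `α₀, α₁, α₂, α₃` built from `p` (with `p₀ := 4 − (p₁+p₂+p₃)`). -/
def alphav (p : Fin 3 → ℝ) : Fin 4 → ℝ :=
  ![(4 - (p 0 + p 1 + p 2)) ^ 2 + p 0 ^ 2 + p 1 ^ 2 + p 2 ^ 2,
    2 * ((4 - (p 0 + p 1 + p 2)) * p 0 + p 1 * p 2),
    2 * ((4 - (p 0 + p 1 + p 2)) * p 1 + p 2 * p 0),
    2 * ((4 - (p 0 + p 1 + p 2)) * p 2 + p 0 * p 1)]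

/-- The probabilities `q⁽¹⁾_p, q⁽²⁾_p, q⁽³⁾_p` (with `Δ_{ij} := p_i − p_j`). -/
def qvec (p : Fin 3 → ℝ) : Fin 3 → ℝ :=
  ![(1 - p 0) ^ 2 - (1/4) * ((p 0 - p 1) ^ 2 - (p 1 - p 2) ^ 2 + (p 2 - p 0) ^ 2),
    (1 - p 1) ^ 2 - (1/4) * ((p 0 - p 1) ^ 2 + (p 1 - p 2) ^ 2 - (p 2 - p 0) ^ 2),
    (1 - p 2) ^ 2 - (1/4) * (-(p 0 - p 1) ^ 2 + (p 1 - p 2) ^ 2 + (p 2 - p 0) ^ 2)]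

/-- `q_p`, the average of the `q⁽ʲ⁾_p`. -/
def qavg (p : Fin 3 → ℝ) : ℝ := (qvec p 0 + qvec p 1 + qvec p 2) / 3

/-! Since `σ_k² = 1`, the identity part of the depolarized state passes through every Pauli
conjugation unchanged, and the Pauli twirl `∑_k σ_k ρ σ_k = 2 tr(ρ) I` turns it back into
`(1 - q_N)/4 · ∑_k σ_k ρ σ_k`. The composite is therefore the Pauli channel with weights
`(1 - q_N)/4 + q_N α_k/16`. These are the stated ones because `∑_k α_k = (p₀ + p₁ + p₂ + p₃)² = 16`
and `q⁽ʲ⁾_p = 1 - α_j/4`. -/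

lemma pauli_zero : pauli 0 = 1 := rfl

lemma pauli_mul_self (k : Fin 4) : pauli k * pauli k = 1 := by
  fin_cases k <;> ext i j <;> fin_cases i <;> fin_cases j <;> simp [pauli]

lemma sum_pauli_conj (ρ : Mat2) : ∑ k, pauli k * ρ * pauli k = (2 * ρ.trace) • 1 := by
  have hI (z : ℂ) : Complex.I * z * Complex.I = -z := by linear_combination z * Complex.I_sq
  rw [eta_fin_two ρ]
  simp [pauli, Fin.sum_univ_four, trace_fin_two_of, one_fin_two, smul_of, hI, two_mul, add_assoc,
    add_left_comm, add_comm]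

lemma conj_smul_one_add_smul {R A : Type*} [CommSemiring R] [Semiring A] [Algebra R A]
    {u : A} (hu : u * u = 1) (a b : R) (x : A) :
    u * (a • 1 + b • x) * u = a • 1 + b • (u * x * u) := by
  simp only [mul_add, add_mul, mul_smul_comm, smul_mul_assoc, mul_one, hu]

lemma sum_smul_pauli_conj_depol (w : Fin 4 → ℂ) (hw : ∑ k, w k = 1) (q : ℂ) {ρ : Mat2}
    (hρ : ρ.trace = 1) :
    ∑ k, w k • (pauli k * (((1 - q) / 2) • 1 + q • ρ) * pauli k)
      = ∑ k, ((1 - q) / 4 + q * w k) • (pauli k * ρ * pauli k) := by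
  set M := fun k => pauli k * ρ * pauli k
  have h_one : (1 : Mat2) = ∑ k, (1 / 2 : ℂ) • M k := by
    rw [← Finset.smul_sum, sum_pauli_conj, hρ, smul_smul]
    norm_num
  calc ∑ k, w k • (pauli k * (((1 - q) / 2) • 1 + q • ρ) * pauli k)
      = ∑ k, w k • (((1 - q) / 2) • (1 : Mat2)) + ∑ k, (q * w k) • M k := by
        simp only [conj_smul_one_add_smul (pauli_mul_self _), smul_add, Finset.sum_add_distrib,
          smul_smul, mul_comm q, M]
    _ = ∑ k, ((1 - q) / 2 * (1 / 2)) • M k + ∑ k, (q * w k) • M k := by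
        rw [← Finset.sum_smul, hw, one_smul, h_one, Finset.smul_sum]
        simp only [smul_smul]
    _ = ∑ k, ((1 - q) / 4 + q * w k) • M k := by
        rw [← Finset.sum_add_distrib]
        refine Finset.sum_congr rfl fun k _ => ?_
        rw [← add_smul]
        congr 1
        ring

lemma sum_alphav (p : Fin 3 → ℝ) : ∑ k, alphav p k = 16 := by
  simp only [alphav, Fin.sum_univ_four, cons_val_zero, cons_val_one, cons_val]
  ring

lemma qvec_eq_one_sub_alphav (p : Fin 3 → ℝ) (j : Fin 3) :
    qvec p j = 1 - alphav p j.succ / 4 := by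
  fin_cases j <;>
    simp only [qvec, alphav, Fin.zero_eta, Fin.mk_one, Fin.reduceFinMk, Fin.succ_zero_eq_one,
      Fin.succ_one_eq_two, Fin.reduceSucc, cons_val_zero, cons_val_one, cons_val] <;>
    ring

lemma qavg_eq_alphav (p : Fin 3 → ℝ) : qavg p = (alphav p 0 / 4 - 1) / 3 := by
  have h := sum_alphav p
  rw [Fin.sum_univ_succ, Fin.sum_univ_three] at h
  simp only [qavg, qvec_eq_one_sub_alphav]
  linarith

theorem noisyPBT_channel_form_general (p : Fin 3 → ℝ) (qN : ℝ) (ρ : Mat2) (hρ : ρ.trace = 1) :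
    ∑ k : Fin 4, ((alphav p k / 16 : ℝ) : ℂ) •
        (pauli k * ((((1 - qN) / 2 : ℝ) : ℂ) • (1 : Mat2) + ((qN : ℝ) : ℂ) • ρ) * pauli k)
      = (((1 + 3 * qN * qavg p) / 4 : ℝ) : ℂ) • ρ +
        ∑ j : Fin 3, (((1 - qN * qvec p j) / 4 : ℝ) : ℂ) •
          (pauli j.succ * ρ * pauli j.succ) := by
  have hw : ∑ k, ((alphav p k / 16 : ℝ) : ℂ) = 1 := by
    rw [← Complex.ofReal_sum, ← Finset.sum_div, sum_alphav]
    norm_num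
  rw [Complex.ofReal_div, Complex.ofReal_sub, Complex.ofReal_one, Complex.ofReal_ofNat,
    sum_smul_pauli_conj_depol _ hw _ hρ, Fin.sum_univ_succ]
  congr 1
  · rw [pauli_zero, one_mul, mul_one, qavg_eq_alphav]
    congr 1
    push_cast
    ring
  · refine Finset.sum_congr rfl fun j _ => ?_
    rw [qvec_eq_one_sub_alphav]
    congr 1
    push_cast
    ring

/-- the noisy PBT channel in Kraus form. -/
theorem noisyPBT_channel_form (p : Fin 3 → ℝ) (hp : ∀ i, 0 ≤ p i)
    (hpsum : p 0 + p 1 + p 2 ≤ 4) (qN : ℝ) (ρ : Mat2) (hρ : ρ.trace = 1) :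
    ∑ k : Fin 4, ((alphav p k / 16 : ℝ) : ℂ) •
        (pauli k * ((((1 - qN) / 2 : ℝ) : ℂ) • (1 : Mat2) + ((qN : ℝ) : ℂ) • ρ) * pauli k)
      = (((1 + 3 * qN * qavg p) / 4 : ℝ) : ℂ) • ρ +
        ∑ j : Fin 3, (((1 - qN * qvec p j) / 4 : ℝ) : ℂ) •
          (pauli j.succ * ρ * pauli j.succ) :=
  noisyPBT_channel_form_general p qN ρ hρ
end
end

section
/- Let p = (p₁,p₂,p₃) be a vector of nonnegative reals with p₁+p₂+p₃ ≤ 4, let q^{(j)}_p and q_p be as defined below, and let q_N be a real number. Define the noisy port-based teleportation channel Λ(ρ) := ((1+3q_N q_p)/4)·ρ + Σ_{j=1}^{3} ((1−q_N q^{(j)}_p)/4)·σ_j ρ σ_j on 2×2 complex matrices, and let w := (1−q^{(1)}_p, 1−q^{(2)}_p, 1−q^{(3)}_p). Then Λ decomposes as a chain of the depolarizing channel and the environment-noise Pauli channel: for every 2×2 complex matrix ρ, Λ(ρ) = D_{q_N}(E_w(ρ)). -/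
/-!
The Pauli twirl `∑ₖ σₖ ρ σₖ = 2 tr(ρ) I` writes the depolarizing channel as a Pauli channel,
and Pauli channels preserve the trace. Hence `D_q ∘ E_w` is again a Pauli channel, with weights
`(1 - q) + q wₖ`; for `w = 1 - q⁽ʲ⁾_p` these are exactly the coefficients of the noisy PBT channel.
-/

open Matrix Kronecker
open scoped ComplexOrder

noncomputable section

lemma trace_mul_mul_eq_of_mul_self_eq_one {n R : Type*} [Fintype n] [DecidableEq n]
    [CommSemiring R] {A : Matrix n n R} (hA : A * A = 1) (ρ : Matrix n n R) :
    (A * ρ * A).trace = ρ.trace := by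
  rw [Matrix.trace_mul_cycle, hA, one_mul]

lemma sum_pauli_mul_mul_pauli (ρ : Mat2) :
    ∑ k, pauli k * ρ * pauli k = (2 * ρ.trace) • (1 : Mat2) := by
  ext i j
  fin_cases i <;> fin_cases j <;>
    simp [Fin.sum_univ_four, pauli, Matrix.mul_apply, Matrix.trace, Fin.sum_univ_two,
      Matrix.vecMul, dotProduct] <;> ring_nf <;> simp only [Complex.I_sq] <;> ring

lemma pw_zero (p : Fin 3 → ℝ) : pw p 0 = 4 - (p 0 + p 1 + p 2) := rfl

lemma pw_succ (p : Fin 3 → ℝ) (j : Fin 3) : pw p j.succ = p j := by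
  fin_cases j <;> rfl

lemma sum_pw (p : Fin 3 → ℝ) : ∑ k, pw p k = 4 := by
  simp only [Fin.sum_univ_succ (n := 3), pw_zero, pw_succ, Fin.sum_univ_three]
  ring

lemma trace_pauliCh (p : Fin 3 → ℝ) (ρ : Mat2) : (pauliCh p ρ).trace = ρ.trace := by
  simp only [pauliCh, Matrix.trace_sum, Matrix.trace_smul,
    trace_mul_mul_eq_of_mul_self_eq_one (pauli_mul_self _), smul_eq_mul]
  rw [← Finset.sum_mul, ← Complex.ofReal_sum, ← Finset.sum_div, sum_pw]
  norm_num

lemma pw_affine (q : ℝ) (p : Fin 3 → ℝ) (k : Fin 4) :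
    pw (fun i => 1 - q + q * p i) k = 1 - q + q * pw p k := by
  refine Fin.cases ?_ (fun j => ?_) k
  · simp only [pw_zero]
    ring
  · simp only [pw_succ]

lemma depol_pauliCh (q : ℝ) (p : Fin 3 → ℝ) (ρ : Mat2) :
    depol q (pauliCh p ρ) = pauliCh (fun i => 1 - q + q * p i) ρ := by
  have twirl : (ρ.trace / 2) • (1 : Mat2) = ∑ k, (1 / 4 : ℂ) • (pauli k * ρ * pauli k) := by
    rw [← Finset.smul_sum, sum_pauli_mul_mul_pauli, smul_smul]
    ring_nf
  rw [depol, trace_pauliCh, mul_div_assoc, ← smul_smul, twirl, pauliCh, pauliCh,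
    Finset.smul_sum, Finset.smul_sum, ← Finset.sum_add_distrib]
  refine Finset.sum_congr rfl fun k _ => ?_
  rw [smul_smul, smul_smul, ← add_smul, pw_affine]
  congr 1
  push_cast
  ring

theorem noisyPBT_chain_decomposition_general (p : Fin 3 → ℝ) (qN : ℝ) (ρ : Mat2) :
    (((1 + 3 * qN * qavg p) / 4 : ℝ) : ℂ) • ρ +
        ∑ j : Fin 3, (((1 - qN * qvec p j) / 4 : ℝ) : ℂ) •
          (pauli j.succ * ρ * pauli j.succ)
      = depol qN (pauliCh (fun i => 1 - qvec p i) ρ) := by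
  rw [depol_pauliCh, pauliCh, Fin.sum_univ_succ (n := 3), pauli_zero, one_mul, mul_one]
  congr 1
  · congr 3
    rw [pw_zero, qavg]
    ring
  · refine Finset.sum_congr rfl fun j _ => ?_
    rw [pw_succ]
    congr 3
    ring

/-- the noisy PBT channel decomposes as `D_{q_N} ∘ E_w` with
`w = (1 − q⁽¹⁾_p, 1 − q⁽²⁾_p, 1 − q⁽³⁾_p)`. -/
theorem noisyPBT_chain_decomposition (p : Fin 3 → ℝ) (hp : ∀ i, 0 ≤ p i)
    (hpsum : p 0 + p 1 + p 2 ≤ 4) (qN : ℝ) (ρ : Mat2) :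
    (((1 + 3 * qN * qavg p) / 4 : ℝ) : ℂ) • ρ +
        ∑ j : Fin 3, (((1 - qN * qvec p j) / 4 : ℝ) : ℂ) •
          (pauli j.succ * ρ * pauli j.succ)
      = depol qN (pauliCh (fun i => 1 - qvec p i) ρ) :=
  noisyPBT_chain_decomposition_general p qN ρ
end
end
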